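/- arXiv:1412.8768 — 2 statements merged into one kernel-verified Lean document; each statement's English description precedes it below -/
import Mathlib

section
/- For every Laurent polynomial h ∈ ℂ[x_1^{±1},…,x_n^{±1}, y_1^{±1},…,y_m^{±1}] that is invariant under S_n × S_m, the Laurent polynomial g = h · ∏_{i=1}^n ∏_{j=1}^m (1 − y_j/x_i)² belongs to the algebra 𝔄_{n,m}. -/
set_option synthInstance.maxHeartbeats 400000
set_option maxHeartbeats 1000000

noncomputable section
open scoped BigOperators

/-- Laurent polynomials in `N = n + m` variables `x₁,…,xₙ,y₁,…,y_m`, as the group algebra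
of the lattice of exponents. -/
abbrev Alg (N : ℕ) := AddMonoidAlgebra ℂ (Fin N → ℤ)

/-- The Euler operator `x_i ∂/∂x_i` on Laurent polynomials. -/
def eulA {N : ℕ} (i : Fin N) : Alg N →ₗ[ℂ] Alg N :=
  (AddMonoidAlgebra.coeffLinearEquiv ℂ).symm.toLinearMap ∘ₗ
    Finsupp.lsum ℂ (fun μ => ((μ i : ℂ)) • Finsupp.lsingle μ) ∘ₗ
    (AddMonoidAlgebra.coeffLinearEquiv ℂ).toLinearMap

/-- The Laurent monomial `x^μ`. -/
def monA {N : ℕ} (μ : Fin N → ℤ) : Alg N := AddMonoidAlgebra.single μ 1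

/-- The permutation of the `N = n + m` indices induced by `(σ, τ) ∈ S_n × S_m`. -/
def permN (n m : ℕ) (σ : Equiv.Perm (Fin n)) (τ : Equiv.Perm (Fin m)) :
    Equiv.Perm (Fin (n+m)) :=
  (finSumFinEquiv.symm.trans ((Equiv.sumCongr σ τ).trans finSumFinEquiv))

/-- Invariance of a Laurent polynomial under `S_n × S_m` (permuting the `x`-variables and the
`y`-variables separately). -/
def SymmInv (n m : ℕ) (f : Alg (n+m)) : Prop :=
  ∀ (σ : Equiv.Perm (Fin n)) (τ : Equiv.Perm (Fin m)) (μ : Fin (n+m) → ℤ),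
    f.coeff (μ ∘ (permN n m σ τ)) = f.coeff μ

/-- The quasi-invariance condition: for all `i, j`, the Laurent polynomial
`x_i ∂f/∂x_i − k y_j ∂f/∂y_j` is divisible by `x_i − y_j`. -/
def QuasiInv (n m : ℕ) (k : ℂ) (f : Alg (n+m)) : Prop :=
  ∀ (i : Fin n) (j : Fin m),
    (monA (Pi.single (Fin.castAdd m i) 1) - monA (Pi.single (Fin.natAdd n j) 1)) ∣
      (eulA (Fin.castAdd m i) f - k • eulA (Fin.natAdd n j) f)

/-! ### Auxiliary lemmas -/

lemma eulA_single {N : ℕ} (i : Fin N) (μ : Fin N → ℤ) (a : ℂ) :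
    eulA i (AddMonoidAlgebra.single μ a) = ((μ i : ℂ)) • AddMonoidAlgebra.single μ a := by
  have : AddMonoidAlgebra.coeffLinearEquiv ℂ (AddMonoidAlgebra.single μ a : Alg N) =
      Finsupp.single μ a := rfl
  rw [eulA, LinearMap.comp_apply, LinearMap.comp_apply, LinearEquiv.coe_coe]
  erw [this, Finsupp.lsum_single]
  rfl

/-- The Euler operator is a derivation. -/
lemma eulA_mul {N : ℕ} (i : Fin N) (f g : Alg N) :
    eulA i (f * g) = eulA i f * g + f * eulA i g := by
  induction f using AddMonoidAlgebra.induction_linear with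
  | zero => simp
  | add f₁ f₂ h₁ h₂ =>
    rw [add_mul, map_add, map_add, h₁, h₂, add_mul]; ring
  | single μ a =>
    induction g using AddMonoidAlgebra.induction_linear with
    | zero => simp
    | add g₁ g₂ h₁ h₂ =>
      rw [mul_add, map_add, map_add, h₁, h₂, mul_add]; ring
    | single ν b =>
      rw [AddMonoidAlgebra.single_mul_single, eulA_single, eulA_single, eulA_single,
        smul_mul_assoc, mul_smul_comm, AddMonoidAlgebra.single_mul_single, ← add_smul,
        Pi.add_apply, Int.cast_add]

lemma monA_mul {N : ℕ} (a b : Fin N → ℤ) : monA a * monA b = monA (a + b) := by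
  simp [monA, AddMonoidAlgebra.single_mul_single]

lemma monA_zero {N : ℕ} : monA (0 : Fin N → ℤ) = 1 := rfl

lemma permN_castAdd (n m : ℕ) (σ : Equiv.Perm (Fin n)) (τ : Equiv.Perm (Fin m)) (i : Fin n) :
    permN n m σ τ (Fin.castAdd m i) = Fin.castAdd m (σ i) := by
  simp [permN]

lemma permN_natAdd (n m : ℕ) (σ : Equiv.Perm (Fin n)) (τ : Equiv.Perm (Fin m)) (j : Fin m) :
    permN n m σ τ (Fin.natAdd n j) = Fin.natAdd n (τ j) := by
  simp [permN]

lemma permN_symm (n m : ℕ) (σ : Equiv.Perm (Fin n)) (τ : Equiv.Perm (Fin m)) :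
    (permN n m σ τ).symm = permN n m σ.symm τ.symm := by
  refine Equiv.ext fun x => ?_
  simp [permN, Equiv.symm_trans_apply, Equiv.sumCongr_symm]

/-- Precomposition with a permutation, as an additive automorphism of the exponent lattice -/
def eA {N : ℕ} (p : Equiv.Perm (Fin N)) : (Fin N → ℤ) ≃+ (Fin N → ℤ) where
  toFun μ := μ ∘ p
  invFun μ := μ ∘ p.symm
  left_inv μ := by ext t; simp
  right_inv μ := by ext t; simp
  map_add' μ ν := rfl

lemma single_comp {N : ℕ} (p : Equiv.Perm (Fin N)) (a : Fin N) (c : ℤ) :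
    (Pi.single a c : Fin N → ℤ) ∘ p = Pi.single (p.symm a) c := by
  ext t
  simp only [Function.comp_apply]
  rcases eq_or_ne t (p.symm a) with rfl | hne
  · rw [Equiv.apply_symm_apply]; simp
  · rw [Pi.single_eq_of_ne hne, Pi.single_eq_of_ne]
    exact fun hc => hne (by simp [← hc])

/-- The action of a permutation of indices on Laurent polynomials. -/
def actA {N : ℕ} (p : Equiv.Perm (Fin N)) : Alg N ≃ₐ[ℂ] Alg N :=
  AddMonoidAlgebra.domCongr ℂ ℂ (eA p)

lemma actA_apply {N : ℕ} (p : Equiv.Perm (Fin N)) (f : Alg N) (μ : Fin N → ℤ) :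
    (actA p f).coeff μ = f.coeff (μ ∘ p.symm) :=
  AddMonoidAlgebra.coeff_domCongr (eA p) f μ

lemma actA_monA {N : ℕ} (p : Equiv.Perm (Fin N)) (ν : Fin N → ℤ) :
    actA p (monA ν) = monA (ν ∘ p) :=
  AddMonoidAlgebra.domCongr_single (eA p) ν 1

/-- Divisibility of the Euler derivative of a multiple of a square. -/
lemma dvd_eul_of_sq {N : ℕ} (ℓ : Fin N) (a F : Alg N) :
    F ∣ eulA ℓ (a * (F * F)) := by
  rw [eulA_mul, eulA_mul]
  refine dvd_add (dvd_mul_of_dvd_right (dvd_mul_left F F) _) (dvd_mul_of_dvd_right ?_ _)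
  exact dvd_add (dvd_mul_left F _) (dvd_mul_right F _)

/-- For every Laurent polynomial `h` invariant under `S_n × S_m`, the
Laurent polynomial `g = h ⬝ ∏_{i=1}^n ∏_{j=1}^m (1 − y_j/x_i)²` belongs to the algebra
`𝔄_{n,m}` (i.e. it is `S_n × S_m`-invariant and quasi-invariant). -/
theorem product_with_squared_factors_is_quasiinvariant
    (n m : ℕ) (hn : 1 ≤ n) (hm : 1 ≤ m) (k : ℂ) (hk : k ≠ 0)
    (h : Alg (n + m)) (hsym : SymmInv n m h) :
    SymmInv n m
      (h * ∏ i : Fin n, ∏ j : Fin m,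
        (1 - monA (Pi.single (Fin.natAdd n j) 1 - Pi.single (Fin.castAdd m i) 1)) ^ 2) ∧
    QuasiInv n m k
      (h * ∏ i : Fin n, ∏ j : Fin m,
        (1 - monA (Pi.single (Fin.natAdd n j) 1 - Pi.single (Fin.castAdd m i) 1)) ^ 2) := by
  set fct : Fin n → Fin m → Alg (n+m) := fun i j =>
    (1 - monA (Pi.single (Fin.natAdd n j) 1 - Pi.single (Fin.castAdd m i) 1)) ^ 2 with hfct
  set P : Alg (n+m) := ∏ i : Fin n, ∏ j : Fin m, fct i j with hP
  -- the action fixes each building block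
  have hactP : ∀ (σ : Equiv.Perm (Fin n)) (τ : Equiv.Perm (Fin m)),
      actA (permN n m σ τ) P = P := by
    intro σ τ
    rw [hP, map_prod]
    have step : ∀ (i : Fin n) (j : Fin m),
        actA (permN n m σ τ) (fct i j) = fct (σ.symm i) (τ.symm j) := by
      intro i j
      rw [hfct]
      simp only [map_pow, map_sub, map_one, actA_monA]
      congr 2
      have : (Pi.single (Fin.natAdd n j) 1 - Pi.single (Fin.castAdd m i) 1 : Fin (n+m) → ℤ)
          ∘ (permN n m σ τ)
          = (Pi.single (Fin.natAdd n j) 1 : Fin (n+m) → ℤ) ∘ (permN n m σ τ)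
            - (Pi.single (Fin.castAdd m i) 1 : Fin (n+m) → ℤ) ∘ (permN n m σ τ) := rfl
      rw [this, single_comp, single_comp, permN_symm, permN_natAdd, permN_castAdd]
    calc (∏ i : Fin n, actA (permN n m σ τ) (∏ j : Fin m, fct i j))
        = ∏ i : Fin n, ∏ j : Fin m, fct (σ.symm i) (τ.symm j) := by
          refine Finset.prod_congr rfl fun i _ => ?_
          rw [map_prod]
          exact Finset.prod_congr rfl fun j _ => step i j
      _ = ∏ i : Fin n, ∏ j : Fin m, fct (σ.symm i) j := by
          refine Finset.prod_congr rfl fun i _ => ?_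
          exact Equiv.prod_comp τ.symm (fun j => fct (σ.symm i) j)
      _ = P := by
          rw [hP]
          exact Equiv.prod_comp σ.symm (fun i => ∏ j : Fin m, fct i j)
  have hacth : ∀ (σ : Equiv.Perm (Fin n)) (τ : Equiv.Perm (Fin m)),
      actA (permN n m σ τ) h = h := by
    intro σ τ
    refine AddMonoidAlgebra.ext (Finsupp.ext fun μ => ?_)
    rw [actA_apply, permN_symm]
    exact hsym σ.symm τ.symm μ
  constructor
  · -- symmetry
    intro σ τ μ
    have key : actA (permN n m σ.symm τ.symm) (h * P) = h * P := by
      rw [map_mul, hactP, hacth]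
    have := (Finsupp.ext_iff.mp (congrArg AddMonoidAlgebra.coeff key)) μ
    rw [actA_apply, permN_symm, Equiv.symm_symm, Equiv.symm_symm] at this
    exact this
  · -- quasi-invariance
    intro i j
    set ei : Fin (n+m) → ℤ := Pi.single (Fin.castAdd m i) 1 with hei
    set ej : Fin (n+m) → ℤ := Pi.single (Fin.natAdd n j) 1 with hej
    set F : Alg (n+m) := 1 - monA (ej - ei) with hF
    have hdF : (monA ei - monA ej) * monA (-ei) = F := by
      have e1 : ei + -ei = 0 := by ring
      have e2 : ej + -ei = ej - ei := by ring
      rw [sub_mul, monA_mul, monA_mul, hF, e1, e2, monA_zero]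
    have hdvdF : (monA ei - monA ej) ∣ F := ⟨monA (-ei), hdF.symm⟩
    -- decompose the product, extracting the (i,j) factor
    have hPdec : P = F * F * ((∏ j' ∈ Finset.univ.erase j, fct i j') *
        ∏ i' ∈ Finset.univ.erase i, ∏ j' : Fin m, fct i' j') := by
      rw [hP, ← Finset.mul_prod_erase Finset.univ (fun i' => ∏ j' : Fin m, fct i' j')
          (Finset.mem_univ i),
        ← Finset.mul_prod_erase Finset.univ (fct i) (Finset.mem_univ j)]
      have : fct i j = F * F := by
        show (1 - monA (ej - ei)) ^ 2 = F * F
        rw [hF, sq]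
      rw [this]; ring
    set Q : Alg (n+m) := (∏ j' ∈ Finset.univ.erase j, fct i j') *
        ∏ i' ∈ Finset.univ.erase i, ∏ j' : Fin m, fct i' j' with hQ
    have hg : h * P = (h * Q) * (F * F) := by rw [hPdec]; ring
    rw [hg]
    have h1 : F ∣ eulA (Fin.castAdd m i) ((h * Q) * (F * F)) := by
      have := dvd_eul_of_sq (Fin.castAdd m i) (h * Q) F
      rwa [mul_assoc] at this ⊢
    have h2 : F ∣ eulA (Fin.natAdd n j) ((h * Q) * (F * F)) := by
      have := dvd_eul_of_sq (Fin.natAdd n j) (h * Q) F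
      rwa [mul_assoc] at this ⊢
    refine dvd_trans hdvdF (dvd_sub h1 ?_)
    obtain ⟨c, hc⟩ := h2
    exact ⟨k • c, by rw [hc, mul_smul_comm]⟩
end
end

section
/- Let (A,B) ∈ 𝒯. If the equivalence class of (A,B) in 𝒯 under ∼ is finite, then it contains an element (Ã,B̃) with Ã ∩ B̃ = ∅. -/
/-- The set `𝒯`: pairs `(A, B)` of finite subsets of `ℤ` with `|A| = n`, `|B| = m`, such that
any two elements of `A` adjacent in the natural order of `ℤ` differ by an odd integer, and
`B ∩ (B−1) = ∅`. -/
def TTmem (n m : ℕ) (A B : Finset ℤ) : Prop :=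
  A.card = n ∧ B.card = m ∧
  (∀ a ∈ A, ∀ a' ∈ A, a < a' → (∀ c ∈ A, ¬(a < c ∧ c < a')) → Odd (a' - a)) ∧
  B ∩ B.image (· - 1) = ∅

/-- The equivalence relation `∼` on `𝒯`:
`A ∖ (B ∪ (B−1)) = Ã ∖ (B̃ ∪ (B̃−1))` and `(B ∪ (B−1)) ∖ A = (B̃ ∪ (B̃−1)) ∖ Ã`. -/
def TTequiv (A B At Bt : Finset ℤ) : Prop :=
  A \ (B ∪ B.image (· - 1)) = At \ (Bt ∪ Bt.image (· - 1)) ∧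
  (B ∪ B.image (· - 1)) \ A = (Bt ∪ Bt.image (· - 1)) \ At

lemma TT13_mem_shadow (B : Finset ℤ) (u : ℤ) : u ∈ B.image (· - 1) ↔ u + 1 ∈ B := by
  simp only [Finset.mem_image]
  constructor
  · rintro ⟨b, hb, rfl⟩
    simpa using hb
  · intro h
    exact ⟨u + 1, h, by ring⟩

lemma TT13_sep_iff (B : Finset ℤ) : B ∩ B.image (· - 1) = ∅ ↔ ∀ b ∈ B, b + 1 ∉ B := by
  constructor
  · intro h b hb hb1
    have : b ∈ B ∩ B.image (· - 1) :=
      Finset.mem_inter.2 ⟨hb, (TT13_mem_shadow B b).2 hb1⟩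
    simp [h] at this
  · intro h
    ext u
    simp only [Finset.mem_inter, TT13_mem_shadow, Finset.notMem_empty, iff_false, not_and]
    exact h u

lemma TT13_block_parity (B : Finset ℤ) (hsep : ∀ b ∈ B, b + 1 ∉ B) (x t : ℤ)
    (hblock : ∀ u, x ≤ u → u ≤ t → (u ∈ B ∨ u + 1 ∈ B)) (hxB : x ∉ B) :
    ∀ u, x ≤ u → u ≤ t → (u ∈ B ↔ (u - x) % 2 = 1) := by
  have key : ∀ k : ℕ, ∀ u, x ≤ u → u ≤ t → u - x = (k : ℤ) → (u ∈ B ↔ (u - x) % 2 = 1) := by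
    intro k
    induction k with
    | zero =>
      intro u hxu hut hk
      have : u = x := by omega
      subst this
      constructor
      · intro h; exact absurd h hxB
      · intro h; omega
    | succ k ih =>
      intro u hxu hut hk
      have ihu := ih (u - 1) (by omega) (by omega) (by omega)
      by_cases hu : u - 1 ∈ B
      · have h1 : u ∉ B := by
          have := hsep (u - 1) hu
          simpa using this
        have h2 : (u - 1 - x) % 2 = 1 := ihu.1 hu
        constructor
        · intro h; exact absurd h h1
        · intro h; omega
      · have h2 : ¬((u - 1 - x) % 2 = 1) := fun h => hu (ihu.2 h)
        have h3 : u ∈ B := by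
          rcases hblock (u - 1) (by omega) (by omega) with h | h
          · exact absurd h hu
          · simpa using h
        constructor
        · intro _; omega
        · intro _; exact h3
  intro u hxu hut
  exact key (u - x).toNat u hxu hut (by omega)

lemma TT13_mem_unionShadow (B : Finset ℤ) (u : ℤ) :
    u ∈ B ∪ B.image (· - 1) ↔ (u ∈ B ∨ u + 1 ∈ B) := by
  rw [Finset.mem_union, TT13_mem_shadow]

lemma TT13_move (n m : ℕ) (A B : Finset ℤ) (h : TTmem n m A B) (hne : (A ∩ B).Nonempty) :
    ∃ A' B', TTmem n m A' B' ∧ TTequiv A B A' B' ∧ (∑ a ∈ A', a) < ∑ a ∈ A, a := by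
  classical
  obtain ⟨hcardA, hcardB, halt, hsepAB⟩ := h
  have hsep : ∀ b ∈ B, b + 1 ∉ B := (TT13_sep_iff B).1 hsepAB
  set t := (A ∩ B).min' hne with ht
  have htAB := (A ∩ B).min'_mem hne
  rw [Finset.mem_inter] at htAB
  obtain ⟨htA, htB⟩ := htAB
  rw [← ht] at htA htB
  have htmin : ∀ a ∈ A, a ∈ B → t ≤ a := fun a ha hb =>
    Finset.min'_le _ _ (Finset.mem_inter.2 ⟨ha, hb⟩)
  set C := B ∪ B.image (· - 1) with hCdef
  have memC : ∀ u : ℤ, u ∈ C ↔ (u ∈ B ∨ u + 1 ∈ B) := fun u => TT13_mem_unionShadow B u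
  have hCne : C.Nonempty := ⟨t, (memC t).2 (Or.inl htB)⟩
  -- the start of the block of C containing t
  set E := (Finset.Icc (C.min' hCne) t).filter (fun z => ∀ u ∈ Finset.Icc z t, u ∈ C) with hE
  have htE : t ∈ E := by
    rw [hE, Finset.mem_filter, Finset.mem_Icc]
    refine ⟨⟨Finset.min'_le _ _ ((memC t).2 (Or.inl htB)), le_rfl⟩, ?_⟩
    intro u hu
    rw [Finset.mem_Icc] at hu
    have : u = t := le_antisymm hu.2 hu.1
    rw [this]
    exact (memC t).2 (Or.inl htB)
  have hEne : E.Nonempty := ⟨t, htE⟩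
  set x := E.min' hEne with hx
  have hxE : x ∈ (Finset.Icc (C.min' hCne) t).filter (fun z => ∀ u ∈ Finset.Icc z t, u ∈ C) :=
    E.min'_mem hEne
  rw [Finset.mem_filter, Finset.mem_Icc] at hxE
  have hxt : x ≤ t := hxE.1.2
  have hxblock : ∀ u, x ≤ u → u ≤ t → u ∈ C := fun u h1 h2 =>
    hxE.2 u (Finset.mem_Icc.2 ⟨h1, h2⟩)
  have hxm1 : x - 1 ∉ C := by
    intro hmem
    have hxm1E : x - 1 ∈ E := by
      rw [hE, Finset.mem_filter, Finset.mem_Icc]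
      refine ⟨⟨Finset.min'_le _ _ hmem, by omega⟩, ?_⟩
      intro u hu
      rw [Finset.mem_Icc] at hu
      by_cases hux : u = x - 1
      · rwa [hux]
      · exact hxblock u (by omega) hu.2
    have := Finset.min'_le _ _ hxm1E
    omega
  have hxm1B : x - 1 ∉ B := fun hb => hxm1 ((memC _).2 (Or.inl hb))
  have hxB : x ∉ B := fun hb => hxm1 ((memC _).2 (Or.inr (by rw [sub_add_cancel]; exact hb)))
  have hpar : ∀ u, x ≤ u → u ≤ t → (u ∈ B ↔ (u - x) % 2 = 1) :=
    TT13_block_parity B hsep x t (fun u h1 h2 => (memC u).1 (hxblock u h1 h2)) hxB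
  have htodd : (t - x) % 2 = 1 := (hpar t hxt le_rfl).1 htB
  have hn1 : 1 ≤ n := by rw [← hcardA]; exact Finset.card_pos.2 ⟨t, htA⟩
  clear ht hx hE hxE htE
  clear_value x
  clear hEne E
  clear_value t C
  by_cases hD : (A ∩ Finset.Icc (x - 1) (t - 1)).Nonempty
  · -- Case M2 : there is an element of A in [x-1, t-1]
    have haltm : ∀ a ∈ A, ∀ a' ∈ A, a < a' → (∀ c ∈ A, ¬(a < c ∧ c < a')) →
        (a' - a) % 2 = 1 := fun a ha a' ha' h1 h2 => Int.odd_iff.1 (halt a ha a' ha' h1 h2)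
    have hs0mem : (A ∩ Finset.Icc (x - 1) (t - 1)).max' hD ∈ A ∩ Finset.Icc (x - 1) (t - 1) :=
      Finset.max'_mem _ hD
    set s0 := (A ∩ Finset.Icc (x - 1) (t - 1)).max' hD with hs0def
    rw [Finset.mem_inter, Finset.mem_Icc] at hs0mem
    obtain ⟨hs0A, hs0r⟩ := hs0mem
    have hs0max : ∀ a ∈ A, x - 1 ≤ a → a ≤ t - 1 → a ≤ s0 := fun a ha h1 h2 =>
      Finset.le_max' _ _ (Finset.mem_inter.2 ⟨ha, Finset.mem_Icc.2 ⟨h1, h2⟩⟩)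
    clear hs0def
    clear_value s0
    have hadj : ∀ a ∈ A, ¬(s0 < a ∧ a < t) := fun a ha hcon => by
      have := hs0max a ha (by omega) (by omega)
      omega
    have hst : s0 < t := by omega
    have hodd_ts : (t - s0) % 2 = 1 :=
      Int.odd_iff.1 (halt s0 hs0A t htA hst (fun ch hch hcon => hadj ch hch hcon))
    have hs0x : x ≤ s0 := by
      by_contra hcon
      omega
    have hs0B : s0 ∉ B := fun hb => by
      have := htmin s0 hs0A hb
      omega
    have hs0even : (s0 - x) % 2 = 0 := by
      have hiff := hpar s0 hs0x (by omega)
      by_contra hcon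
      exact hs0B (hiff.2 (by omega))
    have hAne : A.Nonempty := ⟨t, htA⟩
    set m0 := min (A.min' hAne) (C.min' hCne) with hm0def
    have hm0A : ∀ a ∈ A, m0 ≤ a := fun a ha =>
      le_trans (min_le_left _ _) (Finset.min'_le _ _ ha)
    have hm0C : ∀ u : ℤ, (u ∈ B ∨ u + 1 ∈ B) → m0 ≤ u := fun u hu =>
      le_trans (min_le_right _ _) (Finset.min'_le _ _ ((memC u).2 hu))
    clear hm0def
    clear_value m0
    set Ao := (A.erase t).erase s0 with hAodef
    have hAomem : ∀ u : ℤ, u ∈ Ao ↔ (u ∈ A ∧ u ≠ t ∧ u ≠ s0) := by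
      intro u
      rw [hAodef, Finset.mem_erase, Finset.mem_erase]
      tauto
    set a0 := if hAone : Ao.Nonempty then Ao.min' hAone else t with ha0def
    have ha0Ao : Ao.Nonempty → a0 ∈ Ao := by
      intro hne2
      rw [ha0def, dif_pos hne2]
      exact Finset.min'_mem _ _
    have ha0min : ∀ a ∈ Ao, a0 ≤ a := by
      intro a ha
      rw [ha0def, dif_pos ⟨a, ha⟩]
      exact Finset.min'_le _ _ ha
    have ha0A : a0 ∈ A := by
      by_cases hne2 : Ao.Nonempty
      · exact ((hAomem a0).1 (ha0Ao hne2)).1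
      · rw [ha0def, dif_neg hne2]
        exact htA
    clear ha0def
    clear_value a0
    set c := a0 - 2 * (a0 - m0) - 4 with hcdef
    have hcm0 : c + 2 < m0 := by
      have := hm0A a0 ha0A
      omega
    have hcpar : (a0 - c) % 2 = 0 := by omega
    clear hcdef
    clear_value c
    have hcA : ∀ v ∈ A, c + 2 < v := fun v hv => lt_of_lt_of_le hcm0 (hm0A v hv)
    have hcB : ∀ v ∈ B, c + 2 < v := fun v hv => lt_of_lt_of_le hcm0 (hm0C v (Or.inl hv))
    have hcC : ∀ v : ℤ, (v ∈ B ∨ v + 1 ∈ B) → c + 2 < v := fun v hv =>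
      lt_of_lt_of_le hcm0 (hm0C v hv)
    set B₂ := ((B \ Finset.Icc (s0 + 1) t) ∪
        (B ∩ Finset.Icc (s0 + 1) (t - 2)).image (· + 1)) ∪ {c + 1} with hB₂
    set A₂ := insert c (insert (c + 1) Ao) with hA₂
    have hB2mem : ∀ u : ℤ, u ∈ B₂ ↔ ((u ∈ B ∧ ¬(s0 + 1 ≤ u ∧ u ≤ t)) ∨
        (∃ b, b ∈ B ∧ s0 + 1 ≤ b ∧ b ≤ t - 2 ∧ u = b + 1) ∨ u = c + 1) := by
      intro u
      rw [hB₂, Finset.mem_union, Finset.mem_union, Finset.mem_sdiff, Finset.mem_Icc,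
        Finset.mem_singleton, Finset.mem_image]
      constructor
      · rintro ((⟨h1, h2⟩ | ⟨b, hb, hbe⟩) | h1)
        · exact Or.inl ⟨h1, h2⟩
        · rw [Finset.mem_inter, Finset.mem_Icc] at hb
          exact Or.inr (Or.inl ⟨b, hb.1, hb.2.1, hb.2.2, by omega⟩)
        · exact Or.inr (Or.inr h1)
      · rintro (⟨h1, h2⟩ | ⟨b, hb1, hb2, hb3, hb4⟩ | h1)
        · exact Or.inl (Or.inl ⟨h1, h2⟩)
        · exact Or.inl (Or.inr ⟨b, Finset.mem_inter.2 ⟨hb1, Finset.mem_Icc.2 ⟨hb2, hb3⟩⟩,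
            by omega⟩)
        · exact Or.inr h1
    have hA2mem : ∀ u : ℤ, u ∈ A₂ ↔ (u = c ∨ u = c + 1 ∨ (u ∈ A ∧ u ≠ t ∧ u ≠ s0)) := by
      intro u
      rw [hA₂, Finset.mem_insert, Finset.mem_insert, hAomem]
    have hC2 : ∀ u : ℤ, (u ∈ B₂ ∨ u + 1 ∈ B₂) ↔
        (((u ∈ B ∨ u + 1 ∈ B) ∧ u ≠ s0 ∧ u ≠ t) ∨ u = c ∨ u = c + 1) := by
      intro u
      rw [hB2mem u, hB2mem (u + 1)]
      by_cases hc1 : u = c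
      · exact iff_of_true (Or.inr (Or.inr (Or.inr (by omega)))) (Or.inr (Or.inl hc1))
      · by_cases hc2 : u = c + 1
        · exact iff_of_true (Or.inl (Or.inr (Or.inr hc2))) (Or.inr (Or.inr hc2))
        · rcases lt_trichotomy u s0 with hr | hr | hr
          · constructor
            · rintro ((⟨h1, _⟩ | ⟨b, hb, g2, g3, g4⟩ | h1) |
                (⟨h1, _⟩ | ⟨b, hb, g2, g3, g4⟩ | h1))
              · exact Or.inl ⟨Or.inl h1, by omega, by omega⟩
              · omega
              · omega
              · exact Or.inl ⟨Or.inr h1, by omega, by omega⟩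
              · omega
              · omega
            · rintro (⟨h1 | h1, _, _⟩ | h1 | h1)
              · exact Or.inl (Or.inl ⟨h1, by omega⟩)
              · exact Or.inr (Or.inl ⟨h1, by omega⟩)
              · omega
              · omega
          · refine iff_of_false ?_ ?_
            · rintro ((⟨h1, _⟩ | ⟨b, hb, g2, g3, g4⟩ | h1) |
                (⟨h1, h2⟩ | ⟨b, hb, g2, g3, g4⟩ | h1))
              · exact hs0B (hr ▸ h1)
              · omega
              · have := hcA s0 hs0A
                omega
              · exact h2 ⟨by omega, by omega⟩
              · have hbs0 : b = s0 := by omega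
                exact hs0B (hbs0 ▸ hb)
              · omega
            · rintro (⟨_, hne1, _⟩ | h | h)
              · exact hne1 hr
              · have := hcA s0 hs0A
                omega
              · have := hcA s0 hs0A
                omega
          · rcases lt_trichotomy u t with hr2 | hr2 | hr2
            · have hCu : u ∈ B ∨ u + 1 ∈ B := (memC u).1 (hxblock u (by omega) (by omega))
              refine iff_of_true ?_ (Or.inl ⟨hCu, by omega, by omega⟩)
              by_cases hp : (u - x) % 2 = 1
              · have hut2 : u ≤ t - 2 := by omega
                exact Or.inr (Or.inr (Or.inl
                  ⟨u, (hpar u (by omega) (by omega)).2 hp, by omega, hut2, by omega⟩))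
              · have hb : u - 1 ∈ B := (hpar (u - 1) (by omega) (by omega)).2 (by omega)
                have hu2 : s0 + 2 ≤ u := by omega
                exact Or.inl (Or.inr (Or.inl ⟨u - 1, hb, by omega, by omega, by omega⟩))
            · refine iff_of_false ?_ ?_
              · rintro ((⟨h1, h2⟩ | ⟨b, hb, g2, g3, g4⟩ | h1) |
                  (⟨h1, h2⟩ | ⟨b, hb, g2, g3, g4⟩ | h1))
                · exact h2 ⟨by omega, by omega⟩
                · have hbt : b = t - 1 := by omega
                  have := (hpar b (by omega) (by omega)).1 hb
                  omega
                · have := hcA t htA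
                  omega
                · have he : u + 1 = t + 1 := by omega
                  rw [he] at h1
                  exact hsep t htB h1
                · omega
                · have := hcA t htA
                  omega
              · rintro (⟨_, _, hne2⟩ | h | h)
                · exact hne2 hr2
                · have := hcA t htA
                  omega
                · have := hcA t htA
                  omega
            · constructor
              · rintro ((⟨h1, _⟩ | ⟨b, hb, g2, g3, g4⟩ | h1) |
                  (⟨h1, _⟩ | ⟨b, hb, g2, g3, g4⟩ | h1))
                · exact Or.inl ⟨Or.inl h1, by omega, by omega⟩
                · omega
                · omega
                · exact Or.inl ⟨Or.inr h1, by omega, by omega⟩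
                · omega
                · omega
              · rintro (⟨h1 | h1, _, _⟩ | h1 | h1)
                · exact Or.inl (Or.inl ⟨h1, by omega⟩)
                · exact Or.inr (Or.inl ⟨h1, by omega⟩)
                · omega
                · omega
    have hcmem2 : c + 1 ∉ Ao := fun hmem => by
      have := hcA (c + 1) ((hAomem _).1 hmem).1
      omega
    have hcmem1 : c ∉ insert (c + 1) Ao := by
      rw [Finset.mem_insert]
      rintro (hmem | hmem)
      · omega
      · have := hcA c ((hAomem _).1 hmem).1
        omega
    have hs0et : s0 ∈ A.erase t := Finset.mem_erase.2 ⟨by omega, hs0A⟩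
    refine ⟨A₂, B₂, ⟨?_, ?_, ?_, ?_⟩, ⟨?_, ?_⟩, ?_⟩
    · -- card A₂
      have hn2 : 2 ≤ n := by
        rw [← hcardA]
        exact Finset.one_lt_card.2 ⟨t, htA, s0, hs0A, by omega⟩
      rw [hA₂, Finset.card_insert_of_notMem hcmem1, Finset.card_insert_of_notMem hcmem2,
        hAodef, Finset.card_erase_of_mem hs0et, Finset.card_erase_of_mem htA, hcardA]
      omega
    · -- card B₂
      have hc1inner : c + 1 ∉ (B \ Finset.Icc (s0 + 1) t) ∪
          (B ∩ Finset.Icc (s0 + 1) (t - 2)).image (· + 1) := by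
        rw [Finset.mem_union]
        rintro (hmem | hmem)
        · have := hcB _ (Finset.mem_sdiff.1 hmem).1
          omega
        · rw [Finset.mem_image] at hmem
          obtain ⟨b, hb, hbe⟩ := hmem
          have := hcB b (Finset.mem_inter.1 hb).1
          omega
      have hdisj2 : Disjoint (B \ Finset.Icc (s0 + 1) t)
          ((B ∩ Finset.Icc (s0 + 1) (t - 2)).image (· + 1)) := by
        rw [Finset.disjoint_left]
        intro u hu hu2
        rw [Finset.mem_sdiff, Finset.mem_Icc] at hu
        rw [Finset.mem_image] at hu2
        obtain ⟨b, hb, hbe⟩ := hu2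
        rw [Finset.mem_inter, Finset.mem_Icc] at hb
        exact hu.2 ⟨by omega, by omega⟩
      have hKsplit : B ∩ Finset.Icc (s0 + 1) t = insert t (B ∩ Finset.Icc (s0 + 1) (t - 2)) := by
        ext u
        rw [Finset.mem_insert, Finset.mem_inter, Finset.mem_Icc, Finset.mem_inter,
          Finset.mem_Icc]
        constructor
        · rintro ⟨hu, h1, h2⟩
          by_cases hut : u = t
          · exact Or.inl hut
          · right
            refine ⟨hu, h1, ?_⟩
            have := (hpar u (by omega) (by omega)).1 hu
            omega
        · rintro (rfl | ⟨hu, h1, h2⟩)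
          · exact ⟨htB, by omega, le_rfl⟩
          · exact ⟨hu, h1, by omega⟩
      have htnotin : t ∉ B ∩ Finset.Icc (s0 + 1) (t - 2) := by
        rw [Finset.mem_inter, Finset.mem_Icc]
        rintro ⟨_, _, hco⟩
        omega
      have hinj2 : Function.Injective (fun v : ℤ => v + 1) := fun a b hab => by
        simpa using hab
      have hcards := Finset.card_sdiff_add_card_inter B (Finset.Icc (s0 + 1) t)
      have hKcard : (B ∩ Finset.Icc (s0 + 1) t).card =
          (B ∩ Finset.Icc (s0 + 1) (t - 2)).card + 1 := by
        rw [hKsplit, Finset.card_insert_of_notMem htnotin]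
      rw [hB₂, Finset.card_union_of_disjoint (Finset.disjoint_singleton_right.2 hc1inner),
        Finset.card_union_of_disjoint hdisj2, Finset.card_image_of_injective _ hinj2,
        Finset.card_singleton]
      omega
    · -- alternation for A₂
      intro a ha a' ha' hlt hbet
      rw [Int.odd_iff]
      rw [hA2mem] at ha ha'
      rcases ha with hac | hac | ⟨haA, hant, hans⟩
      · rcases ha' with hac' | hac' | ⟨h'A, h'nt, h'ns⟩
        · omega
        · omega
        · exact absurd ⟨by omega, by have := hcA a' h'A; omega⟩
            (hbet (c + 1) ((hA2mem _).2 (Or.inr (Or.inl rfl))))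
      · rcases ha' with hac' | hac' | ⟨h'A, h'nt, h'ns⟩
        · omega
        · omega
        · have h'Ao : a' ∈ Ao := (hAomem a').2 ⟨h'A, h'nt, h'ns⟩
          have ha0le := ha0min a' h'Ao
          rcases eq_or_lt_of_le ha0le with heq | hlt2
          · omega
          · have ha0Ao' := ha0Ao ⟨a', h'Ao⟩
            have ha0A2 : a0 ∈ A₂ := (hA2mem _).2 (Or.inr (Or.inr ((hAomem a0).1 ha0Ao')))
            exact absurd ⟨by have := hcA a0 ha0A; omega, hlt2⟩ (hbet a0 ha0A2)
      · rcases ha' with hac' | hac' | ⟨h'A, h'nt, h'ns⟩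
        · have := hcA a haA
          omega
        · have := hcA a haA
          omega
        · by_cases hbs : a < s0 ∧ s0 < a'
          · have h1 : t < a' := by
              by_contra hcon
              exact hadj a' h'A ⟨hbs.2, by omega⟩
            have o1 : (s0 - a) % 2 = 1 := by
              refine haltm a haA s0 hs0A hbs.1 (fun ch hch hcon2 => ?_)
              exact hbet ch ((hA2mem ch).2 (Or.inr (Or.inr ⟨hch, by omega, by omega⟩)))
                ⟨hcon2.1, by omega⟩
            have o3 : (a' - t) % 2 = 1 := by
              refine haltm t htA a' h'A h1 (fun ch hch hcon2 => ?_)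
              exact hbet ch ((hA2mem ch).2 (Or.inr (Or.inr ⟨hch, by omega, by omega⟩)))
                ⟨by omega, hcon2.2⟩
            omega
          · by_cases hbt : a < t ∧ t < a'
            · have hs0a : s0 < a := by omega
              exact (hadj a haA ⟨hs0a, hbt.1⟩).elim
            · refine haltm a haA a' h'A hlt (fun ch hch hcon2 => ?_)
              by_cases hct : ch = t
              · exact hbt (hct ▸ hcon2)
              · by_cases hcs : ch = s0
                · exact hbs (hcs ▸ hcon2)
                · exact hbet ch ((hA2mem ch).2 (Or.inr (Or.inr ⟨hch, hct, hcs⟩))) hcon2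
    · -- separation for B₂
      rw [TT13_sep_iff]
      intro b hb hb1
      rw [hB2mem] at hb hb1
      rcases hb with ⟨h1, h2⟩ | ⟨b1, hb1', g2, g3, g4⟩ | h1 <;>
        rcases hb1 with ⟨k1, k2⟩ | ⟨b2, kb1, k2, k3, k4⟩ | k1
      · exact hsep b h1 k1
      · exact h2 ⟨by omega, by omega⟩
      · have := hcB b h1
        omega
      · exact k2 ⟨by omega, by omega⟩
      · have hbe : b2 = b1 + 1 := by omega
        exact hsep b1 hb1' (hbe ▸ kb1)
      · have := hcB b1 hb1'
        omega
      · have := hcB (b + 1) k1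
        omega
      · have := hcB b2 kb1
        omega
      · omega
    · -- TTequiv first component
      ext u
      simp only [Finset.mem_sdiff, TT13_mem_unionShadow, hA2mem]
      rw [hC2 u]
      constructor
      · rintro ⟨h1, h2⟩
        have hut : u ≠ t := fun e => h2 (by rw [e]; exact Or.inl htB)
        have hus : u ≠ s0 := fun e =>
          h2 (by rw [e]; exact (memC s0).1 (hxblock s0 hs0x (by omega)))
        refine ⟨Or.inr (Or.inr ⟨h1, hut, hus⟩), ?_⟩
        rintro (⟨hc, _⟩ | hc | hc)
        · exact h2 hc
        · have := hcA u h1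
          omega
        · have := hcA u h1
          omega
      · rintro ⟨h1, h2⟩
        rcases h1 with hc | hc | ⟨huA, hut, hus⟩
        · exact (h2 (Or.inr (Or.inl hc))).elim
        · exact (h2 (Or.inr (Or.inr hc))).elim
        · exact ⟨huA, fun hcC' => h2 (Or.inl ⟨hcC', hus, hut⟩)⟩
    · -- TTequiv second component
      ext u
      simp only [Finset.mem_sdiff, TT13_mem_unionShadow, hA2mem]
      rw [hC2 u]
      constructor
      · rintro ⟨h1, h2⟩
        have hut : u ≠ t := fun e => h2 (e ▸ htA)
        have hus : u ≠ s0 := fun e => h2 (e ▸ hs0A)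
        refine ⟨Or.inl ⟨h1, hus, hut⟩, ?_⟩
        rintro (hc | hc | ⟨hA', _, _⟩)
        · have := hcC u h1
          omega
        · have := hcC u h1
          omega
        · exact h2 hA'
      · rintro ⟨h1, h2⟩
        rcases h1 with ⟨hC', hus, hut⟩ | hc | hc
        · exact ⟨hC', fun hA' => h2 (Or.inr (Or.inr ⟨hA', hut, hus⟩))⟩
        · exact (h2 (Or.inl hc)).elim
        · exact (h2 (Or.inr (Or.inl hc))).elim
    · -- sum decreases
      have hct := hcA t htA
      have hcs0 := hcA s0 hs0A
      rw [hA₂, Finset.sum_insert hcmem1, Finset.sum_insert hcmem2, hAodef,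
        Finset.sum_erase_eq_sub hs0et, Finset.sum_erase_eq_sub htA]
      linarith
  · -- Case M1 : no element of A in [x-1, t-1]
    have hDe : ∀ a ∈ A, ¬(x - 1 ≤ a ∧ a ≤ t - 1) := by
      intro a ha hcon
      exact hD ⟨a, Finset.mem_inter.2 ⟨ha, Finset.mem_Icc.2 hcon⟩⟩
    have hxm1A : x - 1 ∉ A := fun ha => hDe _ ha ⟨le_rfl, by omega⟩
    set B₁ := (B \ Finset.Icc x t) ∪ (B ∩ Finset.Icc x t).image (· - 1) with hB₁
    set A₁ := insert (x - 1) (A.erase t) with hA₁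
    have hB1mem : ∀ u : ℤ, u ∈ B₁ ↔
        ((u ∈ B ∧ ¬(x ≤ u ∧ u ≤ t)) ∨ (u + 1 ∈ B ∧ x ≤ u + 1 ∧ u + 1 ≤ t)) := by
      intro u
      rw [hB₁, Finset.mem_union, Finset.mem_sdiff, Finset.mem_Icc, Finset.mem_image]
      constructor
      · rintro (⟨h1, h2⟩ | ⟨b, hb, hbe⟩)
        · exact Or.inl ⟨h1, h2⟩
        · rw [Finset.mem_inter, Finset.mem_Icc] at hb
          right
          have hub : u + 1 = b := by omega
          rw [hub]
          exact ⟨hb.1, hb.2⟩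
      · rintro (⟨h1, h2⟩ | ⟨h1, h2, h3⟩)
        · exact Or.inl ⟨h1, h2⟩
        · right
          exact ⟨u + 1, Finset.mem_inter.2 ⟨h1, Finset.mem_Icc.2 ⟨h2, h3⟩⟩, by ring⟩
    have hA1mem : ∀ u : ℤ, u ∈ A₁ ↔ (u = x - 1 ∨ (u ∈ A ∧ u ≠ t)) := by
      intro u
      rw [hA₁, Finset.mem_insert, Finset.mem_erase]
      tauto
    have hx1t : x + 1 ≤ t := by omega
    have hx1B : x + 1 ∈ B := (hpar (x + 1) (by omega) hx1t).2 (by omega)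
    have hC1 : ∀ u : ℤ, (u ∈ B₁ ∨ u + 1 ∈ B₁) ↔
        (((u ∈ B ∨ u + 1 ∈ B) ∧ u ≠ t) ∨ u = x - 1) := by
      intro u
      rw [hB1mem u, hB1mem (u + 1)]
      rcases lt_trichotomy u (x - 1) with hr | hr | hr
      · constructor
        · rintro ((⟨h1, _⟩ | ⟨h1, h2, h3⟩) | (⟨h1, _⟩ | ⟨h1, h2, h3⟩))
          · exact Or.inl ⟨Or.inl h1, by omega⟩
          · omega
          · exact Or.inl ⟨Or.inr h1, by omega⟩
          · have hux : u + 1 + 1 = x := by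
              by_contra hcon
              have := (hpar (u + 1 + 1) (by omega) (by omega)).1 h1
              omega
            rw [hux] at h1
            exact absurd h1 hxB
        · rintro (⟨h1 | h1, _⟩ | h1)
          · exact Or.inl (Or.inl ⟨h1, by omega⟩)
          · exact Or.inr (Or.inl ⟨h1, by omega⟩)
          · omega
      · have hb : u + 1 + 1 ∈ B := by
          have h' : u + 1 + 1 = x + 1 := by omega
          rw [h']
          exact hx1B
        constructor
        · intro _
          exact Or.inr hr
        · intro _
          exact Or.inr (Or.inr ⟨hb, by omega, by omega⟩)
      · rcases lt_trichotomy u t with hr2 | hr2 | hr2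
        · have hCu : u ∈ B ∨ u + 1 ∈ B := (memC u).1 (hxblock u (by omega) (by omega))
          have hmem : ((u ∈ B ∧ ¬(x ≤ u ∧ u ≤ t)) ∨ (u + 1 ∈ B ∧ x ≤ u + 1 ∧ u + 1 ≤ t)) ∨
              ((u + 1 ∈ B ∧ ¬(x ≤ u + 1 ∧ u + 1 ≤ t)) ∨
              (u + 1 + 1 ∈ B ∧ x ≤ u + 1 + 1 ∧ u + 1 + 1 ≤ t)) := by
            by_cases hp : (u - x) % 2 = 1
            · have hut2 : u + 1 + 1 ≤ t := by
                by_contra hcon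
                omega
              exact Or.inr (Or.inr
                ⟨(hpar (u + 1 + 1) (by omega) hut2).2 (by omega), by omega, hut2⟩)
            · exact Or.inl (Or.inr
                ⟨(hpar (u + 1) (by omega) (by omega)).2 (by omega), by omega, by omega⟩)
          exact iff_of_true hmem (Or.inl ⟨hCu, by omega⟩)
        · constructor
          · rintro ((⟨h1, h2⟩ | ⟨h1, h2, h3⟩) | (⟨h1, h2⟩ | ⟨h1, h2, h3⟩))
            · exact absurd ⟨by omega, by omega⟩ h2
            · have : u + 1 = t + 1 := by omega
              rw [this] at h1
              exact absurd h1 (hsep t htB)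
            · have : u + 1 = t + 1 := by omega
              rw [this] at h1
              exact absurd h1 (hsep t htB)
            · omega
          · rintro (⟨_, h1⟩ | h1) <;> omega
        · constructor
          · rintro ((⟨h1, _⟩ | ⟨h1, h2, h3⟩) | (⟨h1, _⟩ | ⟨h1, h2, h3⟩))
            · exact Or.inl ⟨Or.inl h1, by omega⟩
            · omega
            · exact Or.inl ⟨Or.inr h1, by omega⟩
            · omega
          · rintro (⟨h1 | h1, _⟩ | h1)
            · exact Or.inl (Or.inl ⟨h1, by omega⟩)
            · exact Or.inr (Or.inl ⟨h1, by omega⟩)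
            · omega
    refine ⟨A₁, B₁, ⟨?_, ?_, ?_, ?_⟩, ⟨?_, ?_⟩, ?_⟩
    · -- card A₁
      have hxm1A' : x - 1 ∉ A.erase t := fun hmem => hxm1A (Finset.mem_of_mem_erase hmem)
      rw [hA₁, Finset.card_insert_of_notMem hxm1A', Finset.card_erase_of_mem htA, hcardA]
      omega
    · -- card B₁
      have hdisjB1 : Disjoint (B \ Finset.Icc x t) ((B ∩ Finset.Icc x t).image (· - 1)) := by
        rw [Finset.disjoint_left]
        intro u hu hu2
        rw [Finset.mem_sdiff, Finset.mem_Icc] at hu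
        rw [Finset.mem_image] at hu2
        obtain ⟨b, hb, hbe⟩ := hu2
        rw [Finset.mem_inter, Finset.mem_Icc] at hb
        have : u = x - 1 := by omega
        rw [this] at hu
        exact hxm1B hu.1
      have hinj : Function.Injective (fun v : ℤ => v - 1) := fun a b hab => by
        simpa using hab
      rw [hB₁, Finset.card_union_of_disjoint hdisjB1, Finset.card_image_of_injective _ hinj]
      have := Finset.card_sdiff_add_card_inter B (Finset.Icc x t)
      omega
    · -- alternation for A₁
      intro a ha a' ha' hlt hbet
      rw [Int.odd_iff]
      have haltm : ∀ a ∈ A, ∀ a' ∈ A, a < a' → (∀ c ∈ A, ¬(a < c ∧ c < a')) →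
          (a' - a) % 2 = 1 := fun a ha a' ha' h1 h2 => Int.odd_iff.1 (halt a ha a' ha' h1 h2)
      rw [hA1mem] at ha ha'
      rcases ha with rfl | ⟨haA, hat⟩
      · rcases ha' with rfl | ⟨ha'A, ha't⟩
        · exact absurd hlt (lt_irrefl _)
        · have h1 : t < a' := by
            have := hDe a' ha'A
            omega
          have h2 : (a' - t) % 2 = 1 := by
            refine haltm t htA a' ha'A h1 (fun c hc hcon => ?_)
            exact hbet c ((hA1mem c).2 (Or.inr ⟨hc, by omega⟩)) ⟨by omega, hcon.2⟩
          omega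
      · rcases ha' with rfl | ⟨ha'A, ha't⟩
        · have h2 : (t - a) % 2 = 1 := by
            refine haltm a haA t htA (by omega) (fun c hc hcon => ?_)
            have := hDe c hc
            exact hbet c ((hA1mem c).2 (Or.inr ⟨hc, by omega⟩)) ⟨hcon.1, by omega⟩
          omega
        · by_cases hbt : a < t ∧ t < a'
          · have hax : a < x - 1 := by
              have := hDe a haA
              omega
            exact absurd ⟨by omega, by omega⟩ (hbet (x - 1) ((hA1mem _).2 (Or.inl rfl)))
          · refine haltm a haA a' ha'A hlt (fun c hc hcon => ?_)
            by_cases hct : c = t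
            · rw [hct] at hcon
              exact hbt hcon
            · exact hbet c ((hA1mem c).2 (Or.inr ⟨hc, hct⟩)) hcon
    · -- separation for B₁
      rw [TT13_sep_iff]
      intro b hb hb1
      rw [hB1mem] at hb hb1
      rcases hb with ⟨h1, h2⟩ | ⟨h1, h2, h3⟩ <;>
        rcases hb1 with ⟨g1, g2⟩ | ⟨g1, g2, g3⟩
      · exact hsep b h1 g1
      · have hp := (hpar (b + 1 + 1) (by omega) (by omega)).1 g1
        have hb2 : b = x - 1 ∨ b = x - 2 := by omega
        rcases hb2 with hb2 | hb2
        · rw [hb2] at h1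
          exact hxm1B h1
        · omega
      · exact absurd ⟨h2, h3⟩ g2
      · exact hsep (b + 1) h1 g1
    · -- TTequiv first component
      ext u
      simp only [Finset.mem_sdiff, TT13_mem_unionShadow, hA1mem]
      rw [hC1 u]
      constructor
      · rintro ⟨h1, h2⟩
        have hut : u ≠ t := fun e => h2 (e ▸ Or.inl htB)
        refine ⟨Or.inr ⟨h1, hut⟩, ?_⟩
        rintro (⟨hc, _⟩ | hc)
        · exact h2 hc
        · rw [hc] at h1
          exact hxm1A h1
      · rintro ⟨h1, h2⟩
        rcases h1 with hc | ⟨huA, hut⟩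
        · exact (h2 (Or.inr hc)).elim
        · exact ⟨huA, fun hc => h2 (Or.inl ⟨hc, hut⟩)⟩
    · -- TTequiv second component
      ext u
      simp only [Finset.mem_sdiff, TT13_mem_unionShadow, hA1mem]
      rw [hC1 u]
      constructor
      · rintro ⟨h1, h2⟩
        have hut : u ≠ t := fun e => h2 (e ▸ htA)
        refine ⟨Or.inl ⟨h1, hut⟩, ?_⟩
        rintro (hc | ⟨huA, _⟩)
        · rw [hc] at h1
          exact hxm1 ((memC _).2 h1)
        · exact h2 huA
      · rintro ⟨h1, h2⟩
        rcases h1 with ⟨hC', hut⟩ | hc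
        · exact ⟨hC', fun hA => h2 (Or.inr ⟨hA, hut⟩)⟩
        · exact (h2 (Or.inl hc)).elim
    · -- sum decreases
      have hxm1A' : x - 1 ∉ A.erase t := fun hmem => hxm1A (Finset.mem_of_mem_erase hmem)
      rw [hA₁, Finset.sum_insert hxm1A', Finset.sum_erase_eq_sub htA]
      have : x - 1 < t := by omega
      linarith

/-- If the equivalence class in `𝒯` of `(A, B) ∈ 𝒯` is finite, then it
contains an element `(Ã, B̃)` with `Ã ∩ B̃ = ∅`. -/
theorem finite_class_contains_disjoint_representative
    (n m : ℕ) (hn : 1 ≤ n) (hm : 1 ≤ m) (A B : Finset ℤ) (hAB : TTmem n m A B)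
    (hfin : {q : Finset ℤ × Finset ℤ | TTmem n m q.1 q.2 ∧ TTequiv A B q.1 q.2}.Finite) :
    ∃ At Bt : Finset ℤ, TTmem n m At Bt ∧ TTequiv A B At Bt ∧ At ∩ Bt = ∅ := by
  classical
  have hself : (A, B) ∈ {q : Finset ℤ × Finset ℤ | TTmem n m q.1 q.2 ∧ TTequiv A B q.1 q.2} :=
    ⟨hAB, rfl, rfl⟩
  have hQne : hfin.toFinset.Nonempty := ⟨(A, B), hfin.mem_toFinset.2 hself⟩
  obtain ⟨q, hq, hmin⟩ := hfin.toFinset.exists_min_image (fun q => ∑ a ∈ q.1, a) hQne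
  rw [Set.Finite.mem_toFinset] at hq
  by_cases hdisj : q.1 ∩ q.2 = ∅
  · exact ⟨q.1, q.2, hq.1, hq.2, hdisj⟩
  · obtain ⟨A', B', hmem', heq', hsum'⟩ :=
      TT13_move n m q.1 q.2 hq.1 (Finset.nonempty_iff_ne_empty.2 hdisj)
    have hmem2 : (A', B') ∈ hfin.toFinset :=
      hfin.mem_toFinset.2 ⟨hmem', hq.2.1.trans heq'.1, hq.2.2.trans heq'.2⟩
    have := hmin _ hmem2
    simp only at this
    exact absurd (lt_of_le_of_lt this hsum') (lt_irrefl _)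
end
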